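/- arXiv:2401.15830 — 2 statements merged into one kernel-verified Lean document; each statement's English description precedes it below -/
import Mathlib

section
/- Let n ≥ 2 and let k be an integer with 0 ≤ k ≤ 2n−2. Then for every real number r with max(0, k−n) ≤ r ≤ k/2, one has k + r² + (n−k+r)² + (1/2)(k−2r)(k−2r−1) ≤ n². -/
/-- Key quadratic estimate in Case 1 of the transitivity lemma:
for `n ≥ 2`, `0 ≤ k ≤ 2n−2` and `max(0, k−n) ≤ r ≤ k/2`,
`k + r² + (n−k+r)² + (1/2)(k−2r)(k−2r−1) ≤ n²`. -/
theorem stmt_0 (n k : ℕ) (hn : 2 ≤ n) (hk : (k : ℝ) ≤ 2 * n - 2)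
    (r : ℝ) (hr₁ : max 0 ((k : ℝ) - n) ≤ r) (hr₂ : r ≤ (k : ℝ) / 2) :
    (k : ℝ) + r ^ 2 + ((n : ℝ) - k + r) ^ 2 +
      (1 / 2) * ((k : ℝ) - 2 * r) * ((k : ℝ) - 2 * r - 1) ≤ (n : ℝ) ^ 2 := by
  have h0 : (0:ℝ) ≤ r := le_trans (le_max_left _ _) hr₁
  have h1 : (k:ℝ) - n ≤ r := le_trans (le_max_right _ _) hr₁
  have hn' : (2:ℝ) ≤ (n:ℝ) := by exact_mod_cast hn
  nlinarith [mul_nonneg h0 (sub_nonneg.2 (by linarith : r ≤ (k:ℝ)/2)),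
    sq_nonneg (r - ((k:ℝ)-n)), sq_nonneg r,
    mul_nonneg (sub_nonneg.2 h1) (sub_nonneg.2 (by linarith : r ≤ (k:ℝ)/2)),
    sq_nonneg ((k:ℝ)/2 - r)]
end

section
/- Let V be a real inner product space of dimension 2n equipped with an orthogonal complex structure J (i.e., J² = −id and J is an isometry). Let V₁ ⊆ V be a subspace and V₂ = V₁^⊥. Let W₁ be the orthogonal complement of V₁ ∩ J(V₁) inside V₁, and W₂ the orthogonal complement of V₂ ∩ J(V₂) inside V₂. Then dim W₁ = dim W₂. -/
/-! `dim W₁ = dim V₁ - dim (V₁ ∩ J V₁)` and `dim W₂ = dim V₂ - dim (V₂ ∩ J V₂)`. Since `J` is an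
isometry, `V₂ ∩ J V₂ = V₁ᗮ ∩ (J V₁)ᗮ = (V₁ + J V₁)ᗮ`, and counting dimensions of `V₁ + J V₁`
shows that both differences agree. -/

open Module Submodule

namespace Submodule

variable {𝕜 E : Type*} [RCLike 𝕜] [NormedAddCommGroup E] [InnerProductSpace 𝕜 E]

lemma orthogonal_inf_map_orthogonal_equiv (J : E ≃ₗᵢ[𝕜] E) (K : Submodule 𝕜 E) :
    Kᗮ ⊓ Kᗮ.map (J.toLinearEquiv : E →ₗ[𝕜] E) =
      (K ⊔ K.map (J.toLinearEquiv : E →ₗ[𝕜] E))ᗮ := by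
  rw [map_orthogonal_equiv, inf_orthogonal]

lemma finrank_orthogonal_inf_map_add_finrank [FiniteDimensional 𝕜 E] (J : E ≃ₗᵢ[𝕜] E)
    (K : Submodule 𝕜 E) :
    finrank 𝕜 (Kᗮ ⊓ Kᗮ.map (J.toLinearEquiv : E →ₗ[𝕜] E) : Submodule 𝕜 E) + finrank 𝕜 K =
      finrank 𝕜 (K ⊓ K.map (J.toLinearEquiv : E →ₗ[𝕜] E) : Submodule 𝕜 E) + finrank 𝕜 Kᗮ := by
  set JK := K.map (J.toLinearEquiv : E →ₗ[𝕜] E)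
  have hJK : finrank 𝕜 JK = finrank 𝕜 K := J.toLinearEquiv.finrank_map_eq K
  have hsup : finrank 𝕜 (K ⊔ JK : Submodule 𝕜 E) + finrank 𝕜 (K ⊓ JK : Submodule 𝕜 E) =
      finrank 𝕜 K + finrank 𝕜 JK :=
    finrank_sup_add_finrank_inf_eq K JK
  have hsup_orth : finrank 𝕜 (K ⊔ JK : Submodule 𝕜 E) +
      finrank 𝕜 (Kᗮ ⊓ Kᗮ.map (J.toLinearEquiv : E →ₗ[𝕜] E) : Submodule 𝕜 E) = finrank 𝕜 E := by
    rw [orthogonal_inf_map_orthogonal_equiv]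
    exact finrank_add_finrank_orthogonal _
  have hK : finrank 𝕜 K + finrank 𝕜 Kᗮ = finrank 𝕜 E := finrank_add_finrank_orthogonal K
  omega

end Submodule

theorem stmt_3_general {V : Type*} [NormedAddCommGroup V] [InnerProductSpace ℝ V]
    [FiniteDimensional ℝ V] (J : V ≃ₗᵢ[ℝ] V) (V₁ : Submodule ℝ V) :
    finrank ℝ ((V₁ ⊓ V₁.map J.toLinearEquiv.toLinearMap)ᗮ ⊓ V₁ : Submodule ℝ V) =
      finrank ℝ ((V₁ᗮ ⊓ (V₁ᗮ).map J.toLinearEquiv.toLinearMap)ᗮ ⊓ V₁ᗮ : Submodule ℝ V) := by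
  have hW₁ := finrank_add_inf_finrank_orthogonal
    (inf_le_left : V₁ ⊓ V₁.map J.toLinearEquiv.toLinearMap ≤ V₁)
  have hW₂ := finrank_add_inf_finrank_orthogonal
    (inf_le_left : V₁ᗮ ⊓ V₁ᗮ.map J.toLinearEquiv.toLinearMap ≤ V₁ᗮ)
  have key := finrank_orthogonal_inf_map_add_finrank J V₁
  omega

/-- Let `V` be a real inner product space of dimension `2n` with an orthogonal complex
structure `J` (a linear isometry with `J² = −id`), `V₁ ⊆ V` a subspace and `V₂ = V₁ᗮ`.
Let `W₁` be the orthogonal complement of `V₁ ∩ J(V₁)` inside `V₁`, and `W₂` the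
orthogonal complement of `V₂ ∩ J(V₂)` inside `V₂`.  Then `dim W₁ = dim W₂`. -/
theorem stmt_3 {V : Type*} [NormedAddCommGroup V] [InnerProductSpace ℝ V]
    [FiniteDimensional ℝ V] (n : ℕ) (hdim : finrank ℝ V = 2 * n)
    (J : V ≃ₗᵢ[ℝ] V) (hJ : ∀ v, J (J v) = -v)
    (V₁ : Submodule ℝ V) :
    finrank ℝ ((V₁ ⊓ V₁.map J.toLinearEquiv.toLinearMap)ᗮ ⊓ V₁ : Submodule ℝ V) =
      finrank ℝ ((V₁ᗮ ⊓ (V₁ᗮ).map J.toLinearEquiv.toLinearMap)ᗮ ⊓ V₁ᗮ : Submodule ℝ V) :=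
  stmt_3_general J V₁
end
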